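/- arXiv:1007.4270 — 3 statements merged into one kernel-verified Lean document; each statement's English description precedes it below -/
import Mathlib

section
/- The collection of nonempty compact convex subsets of ℝⁿ with Minkowski addition is a commutative semigroup with the cancellation property: if A, B, C are nonempty compact convex subsets of ℝⁿ with A + C = B + C (Minkowski sum), then A = B. -/
/-!
If `a ∉ B`, separate `a` from the closed convex set `B` by a functional `f`, and let `c` maximize
`f` on the compact set `C`. Writing `a + c = b + c'` with `b ∈ B`, `c' ∈ C` gives
`f a ≤ f b`, contradicting the separation.
-/

open Pointwise

theorem Convex.subset_of_add_subset_add_right {E : Type*} [TopologicalSpace E] [AddCommGroup E]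
    [IsTopologicalAddGroup E] [Module ℝ E] [ContinuousSMul ℝ E] [LocallyConvexSpace ℝ E]
    {A B C : Set E} (hB : Convex ℝ B) (hB_closed : IsClosed B) (hC : IsCompact C)
    (hC_ne : C.Nonempty) (h : A + C ⊆ B + C) : A ⊆ B := by
  intro a ha
  by_contra ha_notin
  obtain ⟨f, s, hfB, hfa⟩ := geometric_hahn_banach_closed_point hB hB_closed ha_notin
  obtain ⟨c, hc, hc_max⟩ := hC.exists_isMaxOn hC_ne f.continuous.continuousOn
  obtain ⟨b, hb, c', hc', hsum⟩ := h (Set.add_mem_add ha hc)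
  have hf_sum : f b + f c' = f a + f c := by
    rw [← map_add, ← map_add]
    exact congrArg f hsum
  linarith [hfB b hb, show f c' ≤ f c from hc_max hc']

/-- the nonempty compact convex subsets of `ℝⁿ` with Minkowski addition form a
commutative semigroup (closure and commutativity; associativity holds for all sets) with the
cancellation property: `A + C = B + C` implies `A = B`. -/
theorem convexBodies_semigroup_cancellation (n : ℕ) :
    (∀ A B : Set (Fin n → ℝ),
      A.Nonempty → IsCompact A → Convex ℝ A →
      B.Nonempty → IsCompact B → Convex ℝ B →
      ((A + B).Nonempty ∧ IsCompact (A + B) ∧ Convex ℝ (A + B)) ∧ A + B = B + A) ∧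
    (∀ A B C : Set (Fin n → ℝ),
      A.Nonempty → IsCompact A → Convex ℝ A →
      B.Nonempty → IsCompact B → Convex ℝ B →
      C.Nonempty → IsCompact C → Convex ℝ C →
      A + C = B + C → A = B) := by
  refine ⟨fun A B hA hA_compact hA_convex hB hB_compact hB_convex =>
    ⟨⟨hA.add hB, hA_compact.add hB_compact, hA_convex.add hB_convex⟩, add_comm A B⟩, ?_⟩
  intro A B C _ hA_compact hA_convex _ hB_compact hB_convex hC hC_compact _ h
  exact (hB_convex.subset_of_add_subset_add_right hB_compact.isClosed hC_compact hC h.le).antisymm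
    (hA_convex.subset_of_add_subset_add_right hA_compact.isClosed hC_compact hC h.ge)
end

section
/- For any finite nonempty subset A ⊆ ℤⁿ, the set A is analogous (in the semigroup of finite subsets of ℤⁿ under Minkowski addition) to Δ(A)_ℤ, the set of lattice points in the convex hull of A; that is, there exists a finite set C with A + C = Δ(A)_ℤ + C. -/
/-!
Let `K = conv A ⊂ ℝⁿ` and `m = |A|`, and take for `C` the lattice points of `m • K`. Clearly
`A + C ⊆ Δ(A)_ℤ + C`. Conversely, a point of `Δ(A)_ℤ + C` lies in `(m + 1) • K`; writing it as
`(m + 1) • ∑ wₐ a` with convex weights `w`, some weight is at least `1 / m`, so subtracting the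
corresponding vertex `a` leaves nonnegative weights of total `m`, i.e. a lattice point of `m • K`.
-/

open Pointwise

/-- The canonical embedding `ℤⁿ → ℝⁿ`. -/
def latticeEmb (n : ℕ) : (Fin n → ℤ) → (Fin n → ℝ) := fun v i => (v i : ℝ)

/-- The set of lattice points of the convex hull of `A ⊆ ℤⁿ`. -/
def hullLatticePts (n : ℕ) (A : Set (Fin n → ℤ)) : Set (Fin n → ℤ) :=
  {v | latticeEmb n v ∈ convexHull ℝ (latticeEmb n '' A)}

namespace Finset

variable {E : Type*} [AddCommGroup E] [Module ℝ E]

theorem sum_smul_mem_smul_convexHull (T : Finset E) {w : E → ℝ} (hw₀ : ∀ t ∈ T, 0 ≤ w t)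
    (hws : 0 < ∑ t ∈ T, w t) :
    ∑ t ∈ T, w t • t ∈ (∑ t ∈ T, w t) • convexHull ℝ (T : Set E) :=
  ⟨T.centerMass w id, T.centerMass_id_mem_convexHull hw₀ hws, by
    simp only [centerMass, id, smul_smul, mul_inv_cancel₀ hws.ne', one_smul]⟩

theorem add_one_smul_convexHull_subset [DecidableEq E] (T : Finset E) {m : ℝ} (hm₀ : 0 < m)
    (hm : (#T : ℝ) ≤ m + 1) :
    (m + 1) • convexHull ℝ (T : Set E) ⊆ (T : Set E) + m • convexHull ℝ (T : Set E) := by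
  rintro _ ⟨_, hy, rfl⟩
  obtain ⟨w, hw₀, hw₁, rfl⟩ := mem_convexHull'.1 hy
  have hm₁ : 0 < m + 1 := by linarith
  obtain ⟨t₀, ht₀, hwt₀⟩ : ∃ t₀ ∈ T, 1 / (m + 1) ≤ w t₀ := by
    refine exists_le_of_sum_le (nonempty_of_sum_ne_zero (hw₁ ▸ one_ne_zero)) ?_
    rw [sum_const, nsmul_eq_mul, hw₁, mul_one_div, div_le_one hm₁]
    exact hm
  set v : E → ℝ := fun t => (m + 1) * w t - if t = t₀ then 1 else 0
  have hv₀ : ∀ t ∈ T, 0 ≤ v t := by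
    intro t ht
    have hwt : 0 ≤ (m + 1) * w t := mul_nonneg hm₁.le (hw₀ t ht)
    by_cases h : t = t₀
    · have := (div_le_iff₀ hm₁).1 hwt₀
      simp only [v, h, if_true]
      linarith
    · simpa [v, h] using hwt
  have hv₁ : ∑ t ∈ T, v t = m := by
    simp [v, sum_sub_distrib, ← mul_sum, hw₁, ht₀]
  have hvx : ∑ t ∈ T, v t • t = (m + 1) • ∑ t ∈ T, w t • t - t₀ := by
    simp [v, sub_smul, sum_sub_distrib, smul_sum, smul_smul, ite_smul, ht₀]
  refine ⟨t₀, ht₀, _, hvx ▸ hv₁ ▸ T.sum_smul_mem_smul_convexHull hv₀ (hv₁ ▸ hm₀), ?_⟩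
  exact add_sub_cancel _ _

end Finset

section latticeEmb

variable {n : ℕ}

theorem latticeEmb_add (u v : Fin n → ℤ) :
    latticeEmb n (u + v) = latticeEmb n u + latticeEmb n v := by
  funext i; simp [latticeEmb]

theorem latticeEmb_sub (u v : Fin n → ℤ) :
    latticeEmb n (u - v) = latticeEmb n u - latticeEmb n v := by
  funext i; simp [latticeEmb]

theorem latticeEmb_nsmul (k : ℕ) (v : Fin n → ℤ) :
    latticeEmb n (k • v) = (k : ℝ) • latticeEmb n v := by
  funext i; simp [latticeEmb]

theorem isClosedEmbedding_latticeEmb : Topology.IsClosedEmbedding (latticeEmb n) :=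
  .piMap fun _ => Int.isClosedEmbedding_coe_real

theorem IsCompact.finite_preimage_latticeEmb {K : Set (Fin n → ℝ)} (hK : IsCompact K) :
    (latticeEmb n ⁻¹' K).Finite :=
  tendsto_cofinite_cocompact_iff.1
    (tendsto_cofinite_cocompact_of_discrete isClosedEmbedding_latticeEmb.tendsto_cocompact) K hK

theorem subset_hullLatticePts (A : Set (Fin n → ℤ)) : A ⊆ hullLatticePts n A :=
  fun a ha => subset_convexHull ℝ _ ⟨a, ha, rfl⟩

theorem hullLatticePts_add_preimage_smul_subset (A : Set (Fin n → ℤ)) {m : ℝ} (hm : 0 ≤ m)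
    (h : (m + 1) • convexHull ℝ (latticeEmb n '' A) ⊆
      latticeEmb n '' A + m • convexHull ℝ (latticeEmb n '' A)) :
    hullLatticePts n A + latticeEmb n ⁻¹' (m • convexHull ℝ (latticeEmb n '' A)) ⊆
      A + latticeEmb n ⁻¹' (m • convexHull ℝ (latticeEmb n '' A)) := by
  rintro _ ⟨d, hd, c, hc, rfl⟩
  have hdc : latticeEmb n (d + c) ∈ (1 + m) • convexHull ℝ (latticeEmb n '' A) := by
    rw [(convex_convexHull ℝ _).add_smul zero_le_one hm, one_smul, latticeEmb_add]
    exact Set.add_mem_add hd hc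
  obtain ⟨_, ⟨a, ha, rfl⟩, _, _, hay⟩ := h (add_comm 1 m ▸ hdc)
  refine ⟨a, ha, d + c - a, ?_, add_sub_cancel _ _⟩
  rwa [Set.mem_preimage, latticeEmb_sub, ← hay, add_sub_cancel_left]

end latticeEmb

/-- any finite nonempty `A ⊆ ℤⁿ` is analogous, in the semigroup of finite
nonempty subsets of `ℤⁿ` under Minkowski addition, to the set `Δ(A)_ℤ` of lattice points of
its convex hull: there is a finite nonempty `C` with `A + C = Δ(A)_ℤ + C`. -/
theorem analogous_to_hullLatticePts (n : ℕ) (A : Set (Fin n → ℤ))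
    (hAfin : A.Finite) (hAne : A.Nonempty) :
    ∃ C : Set (Fin n → ℤ), C.Finite ∧ C.Nonempty ∧
      A + C = hullLatticePts n A + C := by
  classical
  obtain ⟨S, rfl⟩ := hAfin.exists_finset_coe
  obtain ⟨a₀, ha₀⟩ := hAne
  set K := convexHull ℝ (latticeEmb n '' S)
  have hm₀ : (0 : ℝ) < S.card := by exact_mod_cast S.card_pos.2 ⟨a₀, ha₀⟩
  have hcover : ((S.card : ℝ) + 1) • K ⊆ latticeEmb n '' S + (S.card : ℝ) • K := by
    have hT := (S.image (latticeEmb n)).add_one_smul_convexHull_subset hm₀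
      (by exact_mod_cast (S.card_image_le).trans (Nat.le_succ _))
    rwa [Finset.coe_image] at hT
  refine ⟨latticeEmb n ⁻¹' ((S.card : ℝ) • K), ?_, ⟨S.card • a₀, ?_⟩, ?_⟩
  · exact ((S.finite_toSet.image _).isCompact_convexHull (𝕜 := ℝ) |>.smul _)
      |>.finite_preimage_latticeEmb
  · rw [Set.mem_preimage, latticeEmb_nsmul]
    exact Set.smul_mem_smul_set (subset_convexHull ℝ _ ⟨a₀, ha₀, rfl⟩)
  · exact (Set.add_subset_add_right (subset_hullLatticePts _)).antisymm
      (hullLatticePts_add_preimage_smul_subset _ hm₀.le hcover)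
end

section
/- Two finite nonempty subsets A, B of ℤⁿ satisfy A + C = B + C for some finite nonempty C ⊆ ℤⁿ if and only if conv(A) = conv(B). -/
/-!
If `A + C = B + C`, then for every linear functional `f` the maximum of `f` over `A` is at most
its maximum over `B` (compare `a + c₀` with `c₀` maximising `f` on `C`) and vice versa, so by
Hahn–Banach the two convex hulls coincide.

Conversely, put `D = A ∪ B`. Every `c ∈ D` is a lattice point of `conv A`; by Carathéodory it is a
positive combination of affinely independent points of `A`, and since the barycentric coordinates
of a lattice point with respect to affinely independent lattice points are rational,
`N • c ∈ N • A` for some `N > 0`. A sum of `M + 1` elements of `D`, with `M = ∑ (N_c - 1)`,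
contains some `c` at least `N_c` times (pigeonhole), hence `A + M • D = (M + 1) • D`. The same
holds for `B`, and `C = M • D` works for `M` large enough for both.
-/

open Pointwise

theorem exists_apply_le_of_add_subset_add {M R F : Type*} [Add M] [AddCommMonoid R]
    [LinearOrder R] [IsOrderedCancelAddMonoid R] [FunLike F M R] [AddHomClass F M R] (f : F)
    {A B C : Set M} (hC : C.Finite) (hCne : C.Nonempty) (h : A + C ⊆ B + C) {a : M} (ha : a ∈ A) :
    ∃ b ∈ B, f a ≤ f b := by
  obtain ⟨c₀, hc₀, hmax⟩ := Set.exists_max_image C f hC hCne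
  obtain ⟨b, hb, c, hc, hbc⟩ := Set.mem_add.1 (h (Set.add_mem_add ha hc₀))
  refine ⟨b, hb, le_of_add_le_add_right (a := f c₀) ?_⟩
  calc f a + f c₀ = f b + f c := by rw [← map_add, ← map_add, hbc]
    _ ≤ f b + f c₀ := add_le_add_right (hmax c hc) _

theorem convexHull_subset_of_add_subset_add {E : Type*} [AddCommGroup E] [Module ℝ E]
    [TopologicalSpace E] [T2Space E] [IsTopologicalAddGroup E] [ContinuousSMul ℝ E]
    [LocallyConvexSpace ℝ E] {A B C : Set E} (hB : B.Finite) (hC : C.Finite) (hCne : C.Nonempty)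
    (h : A + C ⊆ B + C) :
    convexHull ℝ A ⊆ convexHull ℝ B := by
  intro x hxA
  by_contra hxB
  obtain ⟨f, u, hfB, hux⟩ := geometric_hahn_banach_closed_point (convex_convexHull ℝ B)
    (hB.isCompact_convexHull ℝ).isClosed hxB
  have hA : convexHull ℝ A ⊆ {y | f y < u} := by
    refine convexHull_min (fun a ha => ?_) (convex_halfSpace_lt f.isLinear u)
    obtain ⟨b, hb, hab⟩ := exists_apply_le_of_add_subset_add f hC hCne h ha
    exact hab.trans_lt (hfB b (subset_convexHull ℝ B hb))
  exact (hA hxA).not_gt hux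

theorem image_latticeEmb_add (n : ℕ) (A C : Set (Fin n → ℤ)) :
    latticeEmb n '' (A + C) = latticeEmb n '' A + latticeEmb n '' C :=
  Set.image_add ((Int.castAddHom ℝ).compLeft (Fin n))

theorem AffineIndependent.linearIndependent_cons_one {k ι : Type*} [Ring k] {n : ℕ}
    {z : ι → Fin n → k} (hz : AffineIndependent k z) :
    LinearIndependent k (fun i => (Fin.cons 1 (z i) : Fin (n + 1) → k)) := by
  rw [linearIndependent_iff']
  intro s g hg i hi
  refine hz.eq_zero_of_sum_eq_zero ?_ ?_ i hi
  · simpa [Finset.sum_apply] using congrFun hg 0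
  · funext j
    simpa [Finset.sum_apply] using congrFun hg j.succ

theorem exists_intCast_eq_mul_of_linearIndependent {ι κ : Type*} [Fintype ι] [Finite κ]
    {v : ι → κ → ℤ} (hv : LinearIndependent ℝ (fun i => ((↑) : ℤ → ℝ) ∘ v i)) {x : κ → ℤ}
    {w : ι → ℝ} (hx : ((↑) : ℤ → ℝ) ∘ x = ∑ i, w i • (((↑) : ℤ → ℝ) ∘ v i)) :
    ∃ e : ℤ, e ≠ 0 ∧ ∃ k : ι → ℤ, ∀ i, (k i : ℝ) = e * w i := by
  set φ : (κ → ℤ) →+ (κ → ℝ) := (Int.castAddHom ℝ).compLeft κ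
  replace hx : φ x = ∑ i, w i • φ (v i) := hx
  have hvℤ : LinearIndependent ℤ v := by
    rw [← linearIndependent_algebraMap_comp_iff (S := ℝ)]
    simpa [Function.comp_def] using hv
  -- integer vectors are linearly independent over `ℤ` iff they are over `ℝ`
  have hdep : ¬ LinearIndependent ℤ (fun o => Option.casesOn' o x v) := by
    rw [← linearIndependent_algebraMap_comp_iff (S := ℝ)]
    have hcomp : (fun o => algebraMap ℤ ℝ ∘ Option.casesOn' o x v) =
        fun o => Option.casesOn' o (φ x) (fun i => φ (v i)) := by
      funext o; cases o <;> rfl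
    rw [hcomp, linearIndependent_option', hx]
    exact fun h => h.2 <| Submodule.sum_mem _ fun i _ =>
      Submodule.smul_mem _ _ (Submodule.subset_span ⟨i, rfl⟩)
  obtain ⟨g, hg, hg0⟩ := Fintype.not_linearIndependent_iff.1 hdep
  simp only [Fintype.sum_option, Option.casesOn'_none, Option.casesOn'_some] at hg
  have he : g none ≠ 0 := by
    intro he
    rw [he, zero_smul, zero_add] at hg
    obtain ⟨o, ho⟩ := hg0
    cases o with
    | none => exact ho he
    | some i => exact ho (Fintype.linearIndependent_iff.1 hvℤ _ hg i)
  have hsum : ∑ i, ((g none : ℝ) * w i + g (some i)) • φ (v i) = 0 := by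
    have hgφ := congrArg φ hg
    simp only [map_add, map_zsmul, map_sum, map_zero] at hgφ
    calc ∑ i, ((g none : ℝ) * w i + g (some i)) • φ (v i)
        = (g none : ℝ) • ∑ i, w i • φ (v i) + ∑ i, (g (some i) : ℝ) • φ (v i) := by
          simp only [add_smul, Finset.sum_add_distrib, Finset.smul_sum, smul_smul]
      _ = 0 := by simpa only [← hx, Int.cast_smul_eq_zsmul] using hgφ
  refine ⟨g none, he, fun i => -g (some i), fun i => ?_⟩
  push_cast
  linarith [Fintype.linearIndependent_iff.1 hv _ hsum i]

theorem exists_nsmul_eq_sum_nsmul_of_linearIndependent {ι κ : Type*} [Fintype ι] [Finite κ]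
    {v : ι → κ → ℤ} (hv : LinearIndependent ℝ (fun i => ((↑) : ℤ → ℝ) ∘ v i)) {x : κ → ℤ}
    {w : ι → ℝ} (hw : ∀ i, 0 ≤ w i) (hx : ((↑) : ℤ → ℝ) ∘ x = ∑ i, w i • (((↑) : ℤ → ℝ) ∘ v i)) :
    ∃ N : ℕ, 0 < N ∧ ∃ m : ι → ℕ, N • x = ∑ i, m i • v i := by
  obtain ⟨e, he, k, hk⟩ := exists_intCast_eq_mul_of_linearIndependent hv hx
  set φ : (κ → ℤ) →+ (κ → ℝ) := (Int.castAddHom ℝ).compLeft κ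
  replace hx : φ x = ∑ i, w i • φ (v i) := hx
  have hm : ∀ i, (e.natAbs : ℝ) * w i = (k i).natAbs := by
    intro i
    simp only [Nat.cast_natAbs, Int.cast_abs, hk, abs_mul, abs_of_nonneg (hw i)]
  refine ⟨e.natAbs, Int.natAbs_pos.2 he, fun i => (k i).natAbs,
    Int.cast_injective.comp_left (?_ : φ _ = φ _)⟩
  simp only [map_nsmul, map_sum, hx, Finset.smul_sum, ← Nat.cast_smul_eq_nsmul ℝ, smul_smul, hm]

theorem exists_nsmul_mem_nsmul_of_mem_convexHull {n : ℕ} {A : Set (Fin n → ℤ)} {c : Fin n → ℤ}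
    (hc : latticeEmb n c ∈ convexHull ℝ (latticeEmb n '' A)) :
    ∃ N : ℕ, 0 < N ∧ N • c ∈ N • A := by
  obtain ⟨ι, _, z, w, hzA, hz, hw, hw1, hwc⟩ := eq_pos_convex_span_of_mem_convexHull hc
  choose a haA hza using fun i => hzA ⟨i, rfl⟩
  -- a leading coordinate `1` turns affine combinations into linear ones
  have hcast : ∀ (y : ℤ) (v : Fin n → ℤ),
      ((↑) : ℤ → ℝ) ∘ (Fin.cons y v : Fin (n + 1) → ℤ) = Fin.cons (y : ℝ) (latticeEmb n v) :=
    fun y v => Fin.comp_cons _ _ _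
  have hV : LinearIndependent ℝ
      (fun i => ((↑) : ℤ → ℝ) ∘ (Fin.cons 1 (a i) : Fin (n + 1) → ℤ)) := by
    simpa only [hcast, hza, Int.cast_one] using hz.linearIndependent_cons_one
  have hX : ((↑) : ℤ → ℝ) ∘ (Fin.cons 1 c : Fin (n + 1) → ℤ) =
      ∑ i, w i • ((↑) : ℤ → ℝ) ∘ (Fin.cons 1 (a i) : Fin (n + 1) → ℤ) := by
    simp only [hcast, hza, Int.cast_one]
    refine funext (Fin.cases ?_ fun j => ?_)
    · simp [Finset.sum_apply, hw1]
    · simp [Finset.sum_apply, ← hwc]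
  obtain ⟨N, hN, m, hm⟩ :=
    exists_nsmul_eq_sum_nsmul_of_linearIndependent hV (fun i => (hw i).le) hX
  have hmN : ∑ i, m i = N := by
    have h0 := congrFun hm 0
    simp only [Finset.sum_apply, Pi.smul_apply, Fin.cons_zero, nsmul_one] at h0
    exact_mod_cast h0.symm
  have hmc : N • c = ∑ i, m i • a i := funext fun j => by
    simpa [Finset.sum_apply] using congrFun hm j.succ
  refine ⟨N, hN, ?_⟩
  rw [hmc, ← hmN, ← Finset.sum_nsmul_assoc]
  exact Set.finsetSum_mem_finsetSum _ _ _ fun i _ => Set.nsmul_mem_nsmul (haA i)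

section Stabilization

variable {G : Type*} [AddCommMonoid G]

theorem Set.Finite.nsmul {s : Set G} (hs : s.Finite) : ∀ n : ℕ, (n • s).Finite
  | 0 => by simp
  | n + 1 => by rw [succ_nsmul]; exact (hs.nsmul n).add hs

theorem Set.mem_nsmul_iff_exists_multiset {s : Set G} {k : ℕ} {x : G} :
    x ∈ k • s ↔ ∃ m : Multiset G, (∀ y ∈ m, y ∈ s) ∧ Multiset.card m = k ∧ m.sum = x := by
  constructor
  · rw [Set.mem_nsmul_iff_sum]
    rintro ⟨f, hf, rfl⟩
    exact ⟨Finset.univ.val.map f, by simpa using hf, by simp, rfl⟩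
  · rintro ⟨m, hm, rfl, rfl⟩
    simpa [Multiset.map_const'] using
      Set.multiset_sum_mem_multiset_sum m (fun _ => s) id hm

theorem Multiset.exists_le_count_of_sum_lt_card {α : Type*} [DecidableEq α] {m : Multiset α}
    {t : Finset α} (hm : ∀ a ∈ m, a ∈ t) (N : α → ℕ) (h : ∑ a ∈ t, (N a - 1) < card m) :
    ∃ a ∈ t, N a ≤ m.count a := by
  by_contra! hlt
  rw [← Multiset.sum_count_eq_card hm] at h
  exact h.not_ge (Finset.sum_le_sum fun a ha => Nat.le_sub_one_of_lt (hlt a ha))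

theorem Set.exists_add_nsmul_eq_succ_nsmul {A D : Set G} (hAD : A ⊆ D) (hD : D.Finite)
    (hN : ∀ c ∈ D, ∃ N : ℕ, 0 < N ∧ N • c ∈ N • A) : ∃ M : ℕ, A + M • D = (M + 1) • D := by
  classical
  choose! N hNpos hNmem using hN
  set M := ∑ c ∈ hD.toFinset, (N c - 1)
  refine ⟨M, subset_antisymm ?_ fun x hx => ?_⟩
  · rw [succ_nsmul']
    exact Set.add_subset_add hAD subset_rfl
  obtain ⟨m, hmD, hcard, rfl⟩ := Set.mem_nsmul_iff_exists_multiset.1 hx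
  obtain ⟨c, hcD, hc⟩ := m.exists_le_count_of_sum_lt_card (t := hD.toFinset)
    (by simpa using hmD) N (by omega)
  rw [hD.mem_toFinset] at hcD
  obtain ⟨m', rfl⟩ := Multiset.le_iff_exists_add.1 (Multiset.le_count_iff_replicate_le.1 hc)
  have hcard' : Multiset.card m' = M + 1 - N c := by
    simp only [Multiset.card_add, Multiset.card_replicate] at hcard
    omega
  have hNc : N c • c ∈ A + (N c - 1) • D := by
    have h := hNmem c hcD
    obtain ⟨k, hk⟩ := Nat.exists_eq_add_one_of_ne_zero (hNpos c hcD).ne'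
    rw [hk, succ_nsmul' A] at h
    rw [hk, Nat.add_sub_cancel]
    exact Set.add_subset_add subset_rfl (Set.nsmul_subset_nsmul_left hAD) h
  have hm' : m'.sum ∈ (M + 1 - N c) • D :=
    Set.mem_nsmul_iff_exists_multiset.2 ⟨m', fun y hy => hmD y (by simp [hy]), hcard', rfl⟩
  have hsplit : N c - 1 + (M + 1 - N c) = M := by
    have := Multiset.card_le_card (Multiset.le_add_right (Multiset.replicate (N c) c) m')
    simp only [Multiset.card_replicate] at this
    have := hNpos c hcD
    omega
  rw [Multiset.sum_add, Multiset.sum_replicate, ← hsplit, add_nsmul, ← add_assoc]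
  exact Set.add_mem_add hNc hm'

theorem Set.add_nsmul_eq_succ_nsmul_of_le {A D : Set G} {M m : ℕ}
    (h : A + M • D = (M + 1) • D) (hm : M ≤ m) : A + m • D = (m + 1) • D := by
  induction m, hm using Nat.le_induction with
  | base => exact h
  | succ m _ ih => rw [succ_nsmul, ← add_assoc, ih, ← succ_nsmul]

end Stabilization

theorem analogous_iff_convexHull_eq_general (n : ℕ) (A B : Set (Fin n → ℤ))
    (hAfin : A.Finite) (hAne : A.Nonempty) (hBfin : B.Finite) :
    (∃ C : Set (Fin n → ℤ), C.Finite ∧ C.Nonempty ∧ A + C = B + C) ↔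
      convexHull ℝ (latticeEmb n '' A) = convexHull ℝ (latticeEmb n '' B) := by
  constructor
  · rintro ⟨C, hC, hCne, h⟩
    have hull_subset : ∀ {S T : Set (Fin n → ℤ)}, T.Finite → S + C = T + C →
        convexHull ℝ (latticeEmb n '' S) ⊆ convexHull ℝ (latticeEmb n '' T) :=
      fun hT hST => convexHull_subset_of_add_subset_add (hT.image _) (hC.image _)
        (hCne.image _) (by rw [← image_latticeEmb_add, ← image_latticeEmb_add, hST])
    exact (hull_subset hBfin h).antisymm (hull_subset hAfin h.symm)
  · intro h
    set D := A ∪ B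
    have hD : D.Finite := hAfin.union hBfin
    have hDA : latticeEmb n '' D ⊆ convexHull ℝ (latticeEmb n '' A) := by
      rw [Set.image_union]
      exact Set.union_subset (subset_convexHull ℝ _)
        ((subset_convexHull ℝ _).trans h.symm.subset)
    obtain ⟨MA, hMA⟩ := Set.exists_add_nsmul_eq_succ_nsmul Set.subset_union_left hD
      fun c hc => exists_nsmul_mem_nsmul_of_mem_convexHull (hDA ⟨c, hc, rfl⟩)
    obtain ⟨MB, hMB⟩ := Set.exists_add_nsmul_eq_succ_nsmul Set.subset_union_right hD
      fun c hc => exists_nsmul_mem_nsmul_of_mem_convexHull (hDA.trans h.subset ⟨c, hc, rfl⟩)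
    refine ⟨max MA MB • D, hD.nsmul _, (hAne.mono Set.subset_union_left).nsmul, ?_⟩
    rw [Set.add_nsmul_eq_succ_nsmul_of_le hMA (le_max_left _ _),
      Set.add_nsmul_eq_succ_nsmul_of_le hMB (le_max_right _ _)]

/-- two finite nonempty subsets `A, B ⊆ ℤⁿ` satisfy `A + C = B + C` for some
finite nonempty `C ⊆ ℤⁿ` if and only if they have the same convex hull in `ℝⁿ`. -/
theorem analogous_iff_convexHull_eq (n : ℕ) (A B : Set (Fin n → ℤ))
    (hAfin : A.Finite) (hAne : A.Nonempty) (hBfin : B.Finite) (hBne : B.Nonempty) :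
    (∃ C : Set (Fin n → ℤ), C.Finite ∧ C.Nonempty ∧ A + C = B + C) ↔
      convexHull ℝ (latticeEmb n '' A) = convexHull ℝ (latticeEmb n '' B) :=
  analogous_iff_convexHull_eq_general n A B hAfin hAne hBfin
end
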